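/- Let s ≥ 1 be an integer, q = 2^s, m ≥ 2 an even integer, and n = q^m − 1. Then the code C_{(q,m;1)} is a linear complementary dual (LCD) code, i.e. C_{(q,m;1)} ∩ C_{(q,m;1)}^⊥ = {0}, and its dimension as an F-vector space is (n−1)/2. -/

import Mathlib

open Finset

/-- The `q`-weight of a nonnegative integer: the sum of its base-`q` digits. -/
def qWeight (q i : ℕ) : ℕ := (Nat.digits q i).sum

/-- The set `T_{(q,m;j)} = {i : 1 ≤ i ≤ q^m − 2, wt_q(i) ≡ j (mod 2)}`. -/
def Tset (q m j : ℕ) : Set ℕ :=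
  {i | 1 ≤ i ∧ i ≤ q ^ m - 2 ∧ qWeight q i % 2 = j}

/-- The cyclic code of length `n` over `F` with defining set `T` with respect to `β ∈ E`:
all words `(c_0, …, c_{n-1})` with `∑_j c_j β^{k j} = 0` for every `k ∈ T`. -/
def cyclicCode (F E : Type*) [Field F] [Field E] [Algebra F E]
    (n : ℕ) (β : E) (T : Set ℕ) : Submodule F (Fin n → F) where
  carrier := {c | ∀ k ∈ T, ∑ j : Fin n, algebraMap F E (c j) * β ^ (k * (j : ℕ)) = 0}
  add_mem' := by
    intro a b ha hb k hk
    simp only [Set.mem_setOf_eq, Pi.add_apply, map_add, add_mul] at *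
    rw [Finset.sum_add_distrib, ha k hk, hb k hk, add_zero]
  zero_mem' := by
    intro k hk
    simp
  smul_mem' := by
    intro r c hc k hk
    simp only [Set.mem_setOf_eq, Pi.smul_apply, smul_eq_mul, map_mul, mul_assoc] at *
    rw [← Finset.mul_sum, hc k hk, mul_zero]

/-- The minimum distance of a code: the least Hamming weight of a nonzero codeword. -/
noncomputable def minDist {F : Type*} [Field F] [DecidableEq F] {n : ℕ}
    (C : Submodule F (Fin n → F)) : ℕ :=
  sInf {w | ∃ c ∈ C, c ≠ 0 ∧ hammingNorm c = w}

/-- The dual of a set of words: all words orthogonal (for the standard bilinear form)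
to every word of the set. -/
def dualSet {F : Type*} [Field F] {N : ℕ} (C : Set (Fin N → F)) : Set (Fin N → F) :=
  {u | ∀ v ∈ C, ∑ k : Fin N, u k * v k = 0}

/-!
Multiplication by `q` modulo `n = q ^ m - 1` rotates base-`q` digits, so the exponents of odd
`q`-weight and those of even `q`-weight (with `0`) are both unions of `q`-cyclotomic cosets.
Each defines a cyclic code, `C₁` resp. `C₀`, with a generator polynomial over `F`, of dimension
`n` minus the size of the defining set. Pairing `2t` with `2t + 1` shows that exactly `q ^ m / 2`
exponents have odd weight, so `dim C₁ = (n - 1) / 2` and `dim C₀ = (n + 1) / 2`. A word of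
`C₀ ∩ C₁` vanishes at all `n`-th roots of unity, so `C₀ ⊕ C₁ = Fⁿ`. As `m` is even, `k ↦ n - k`
preserves the parity of the weight, and Parseval's identity for the discrete Fourier transform
gives `C₀ ⊥ C₁`. Hence a word of `C₁ ∩ C₁^⊥` is orthogonal to `C₀ + C₁ = Fⁿ` and vanishes.
-/

open Polynomial Module

section qWeight

variable {q : ℕ}

lemma qWeight_eq_mod_add_div (hq : 2 ≤ q) (i : ℕ) :
    qWeight q i = i % q + qWeight q (i / q) := by
  rcases Nat.eq_zero_or_pos i with rfl | hi
  · simp [qWeight]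
  · simp [qWeight, Nat.digits_def' hq hi]

lemma qWeight_of_lt (hq : 2 ≤ q) {x : ℕ} (hx : x < q) : qWeight q x = x := by
  rw [qWeight_eq_mod_add_div hq, Nat.mod_eq_of_lt hx, Nat.div_eq_of_lt hx]
  simp [qWeight]

lemma qWeight_add_mul (hq : 2 ≤ q) {x : ℕ} (hx : x < q) (y : ℕ) :
    qWeight q (x + q * y) = x + qWeight q y := by
  rw [qWeight_eq_mod_add_div hq, Nat.add_mul_mod_self_left, Nat.mod_eq_of_lt hx,
    Nat.add_mul_div_left _ _ (by omega), Nat.div_eq_of_lt hx, zero_add]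

lemma qWeight_add_pow_mul (hq : 2 ≤ q) (j : ℕ) {x : ℕ} (hx : x < q ^ j) (y : ℕ) :
    qWeight q (x + q ^ j * y) = qWeight q x + qWeight q y := by
  induction j generalizing x with
  | zero => simp_all [qWeight]
  | succ j ih =>
    have hxq : x / q < q ^ j := Nat.div_lt_of_lt_mul (by rwa [mul_comm, ← pow_succ])
    have hsplit : x + q ^ (j + 1) * y = x % q + q * (x / q + q ^ j * y) := by
      rw [pow_succ']; nlinarith [Nat.mod_add_div x q]
    rw [hsplit, qWeight_add_mul hq (Nat.mod_lt _ (by omega)), ih hxq,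
      qWeight_eq_mod_add_div hq x, add_assoc]

/-- The base-`q` addition `x + y = q ^ m - 1` involves no carries. -/
lemma qWeight_add_qWeight_of_add_one_eq_pow (hq : 2 ≤ q) (m : ℕ) {x y : ℕ}
    (h : x + y + 1 = q ^ m) : qWeight q x + qWeight q y = m * (q - 1) := by
  induction m generalizing x y with
  | zero =>
    obtain ⟨rfl, rfl⟩ : x = 0 ∧ y = 0 := by simp at h; omega
    simp [qWeight]
  | succ m ih =>
    have hx := Nat.mod_add_div x q
    have hy := Nat.mod_add_div y q
    have hxq := Nat.mod_lt x (show 0 < q by omega)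
    have hyq := Nat.mod_lt y (show 0 < q by omega)
    have hdvd : q ∣ x % q + y % q + 1 :=
      (Nat.dvd_add_right (dvd_mul_right q (x / q + y / q))).mp
        ⟨q ^ m, by rw [← pow_succ']; linarith⟩
    have hlow : x % q + y % q + 1 = q := by
      obtain ⟨t, ht⟩ := hdvd
      rcases t with _ | _ | t
      · omega
      · omega
      · nlinarith
    have hhigh : x / q + y / q + 1 = q ^ m := by
      have : q * (x / q + y / q + 1) = q * q ^ m := by rw [← pow_succ']; linarith
      exact Nat.eq_of_mul_eq_mul_left (by omega) this
    rw [qWeight_eq_mod_add_div hq x, qWeight_eq_mod_add_div hq y]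
    have := ih hhigh
    rw [Nat.succ_mul]
    omega

lemma qWeight_mul_mod (hq : 2 ≤ q) {m k : ℕ} (hk : k < q ^ m - 1) :
    qWeight q (q * k % (q ^ m - 1)) = qWeight q k := by
  obtain _ | m := m
  · simp at hk
  set P := q ^ m
  have hP : q ^ (m + 1) = q * P := pow_succ' q m
  obtain ⟨a, b, ha, hb, rfl⟩ : ∃ a b, a < q ∧ b < P ∧ k = b + P * a :=
    ⟨k / P, k % P, Nat.div_lt_of_lt_mul (by rw [mul_comm, ← hP]; omega),
      Nat.mod_lt k (by positivity), (Nat.mod_add_div k P).symm⟩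
  have hqP : q * b + q ≤ q * P := by nlinarith
  have hab : a + q * b < q * P - 1 := by
    by_contra hcon
    have hb' : b + 1 = P :=
      Nat.eq_of_mul_eq_mul_left (show 0 < q by omega) (by rw [mul_add]; omega)
    have : P * a + P = P * q := by rw [← mul_add_one, show a + 1 = q by omega]
    rw [hP] at hk
    nlinarith
  have hqk : q * (b + P * a) = (a + q * b) + a * (q * P - 1) := by
    have : 1 ≤ q * P := by nlinarith [show 0 < P by positivity]
    zify [this]
    ring
  rw [hP, hqk, Nat.add_mul_mod_self_right, Nat.mod_eq_of_lt hab, qWeight_add_mul hq ha,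
    qWeight_add_pow_mul hq m hb, qWeight_of_lt hq ha]
  ring

lemma qWeight_succ_of_even (hq : 2 ≤ q) (hqe : Even q) {i : ℕ} (hi : Even i) :
    qWeight q (i + 1) = qWeight q i + 1 := by
  have hlt : i % q + 1 < q := by
    have : i % q % 2 = 0 := by
      rw [Nat.mod_mod_of_dvd _ (even_iff_two_dvd.mp hqe)]; exact Nat.even_iff.mp hi
    have := Nat.mod_lt i (show 0 < q by omega)
    have : q % 2 = 0 := Nat.even_iff.mp hqe
    omega
  have hsplit : i + 1 = (i % q + 1) + q * (i / q) := by have := Nat.mod_add_div i q; omega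
  rw [hsplit, qWeight_add_mul hq hlt, qWeight_eq_mod_add_div hq i]
  ring

lemma card_filter_qWeight_odd (hq : 2 ≤ q) (hqe : Even q) (B : ℕ) :
    #((range (2 * B)).filter (fun i => qWeight q i % 2 = 1)) = B := by
  rw [card_filter]
  induction B with
  | zero => simp
  | succ B ih =>
    rw [show 2 * (B + 1) = 2 * B + 1 + 1 by ring, sum_range_succ, sum_range_succ, ih,
      qWeight_succ_of_even hq hqe (even_two_mul B)]
    split_ifs <;> omega

end qWeight

lemma natCast_card_sub_one_ne_zero (E : Type*) [Field E] [Fintype E] :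
    ((Fintype.card E - 1 : ℕ) : E) ≠ 0 := by
  simp [Nat.cast_sub Fintype.card_pos]

section FiniteField

variable {F E : Type*} [Field F] [Fintype F] [Field E] [Finite E] [Algebra F E]

lemma mem_range_algebraMap_of_pow_card_eq {x : E} (hx : x ^ Fintype.card F = x) :
    x ∈ Set.range (algebraMap F E) := by
  rw [IsGalois.mem_range_algebraMap_iff_fixed]
  intro f
  obtain ⟨k, rfl⟩ := (FiniteField.bijective_frobeniusAlgEquivOfAlgebraic_pow F E).2 f
  rw [AlgEquiv.coe_pow, FiniteField.coe_frobeniusAlgEquivOfAlgebraic]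
  exact Function.iterate_fixed hx k

/-- The product is fixed by the Frobenius of `E / F`, so its coefficients lie in `F`. -/
lemma exists_monic_map_eq_prod_X_sub_C (R : Finset E) (hR : ∀ x ∈ R, x ^ Fintype.card F ∈ R) :
    ∃ g : F[X], g.Monic ∧ g.map (algebraMap F E) = ∏ x ∈ R, (X - C x) := by
  classical
  set φ := FiniteField.frobeniusAlgHom F E
  have hφR : R.image φ = R :=
    eq_of_subset_of_card_le (image_subset_iff.mpr hR) (card_image_of_injective R φ.injective).ge
  have hfixed : (∏ x ∈ R, (X - C x)).map φ.toRingHom = ∏ x ∈ R, (X - C x) := by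
    conv_rhs => rw [← hφR, prod_image (f := fun x => X - C x) (g := ⇑φ) φ.injective.injOn]
    simp [Polynomial.map_prod]
  have hlifts : ∏ x ∈ R, (X - C x) ∈ lifts (algebraMap F E) := by
    rw [lifts_iff_coeff_lifts]
    intro i
    apply mem_range_algebraMap_of_pow_card_eq
    simpa [φ] using congrArg (coeff · i) hfixed
  obtain ⟨g, hg, -, hmonic⟩ :=
    lifts_and_degree_eq_and_monic hlifts (monic_prod_of_monic _ _ fun x _ => monic_X_sub_C x)
  exact ⟨g, hmonic, hg⟩

end FiniteField

section
variable {K : Type*} [Field K] [DecidableEq K] {g : K[X]}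

lemma range_modByMonicHom_comp_ofFn (hg : g.Monic) {n : ℕ} (hn : g.natDegree ≤ n) :
    LinearMap.range (modByMonicHom g ∘ₗ ofFn n) = degreeLT K g.natDegree := by
  apply le_antisymm
  · rintro _ ⟨c, rfl⟩
    rw [mem_degreeLT, ← degree_eq_natDegree hg.ne_zero]
    exact degree_modByMonic_lt _ hg
  · intro p hp
    rw [mem_degreeLT, ← degree_eq_natDegree hg.ne_zero] at hp
    by_cases hp0 : p = 0
    · exact hp0 ▸ Submodule.zero_mem _
    refine ⟨toFn n p, ?_⟩
    have hpg : p.natDegree < g.natDegree :=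
      (natDegree_lt_iff_degree_lt hp0).mpr (hp.trans_eq (degree_eq_natDegree hg.ne_zero))
    have hpn : p.natDegree < n := hpg.trans_le hn
    simp [ofFn_comp_toFn_eq_id_of_natDegree_lt hpn, (modByMonic_eq_self_iff hg).mpr hp]

lemma finrank_ker_modByMonicHom_comp_ofFn (hg : g.Monic) {n : ℕ} (hn : g.natDegree ≤ n) :
    finrank K (LinearMap.ker (modByMonicHom g ∘ₗ ofFn n)) = n - g.natDegree := by
  have h := LinearMap.finrank_range_add_finrank_ker (modByMonicHom g ∘ₗ ofFn n)
  rw [range_modByMonicHom_comp_ofFn hg hn, (degreeLTEquiv K _).finrank_eq, finrank_fin_fun,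
    finrank_fin_fun] at h
  omega

end

section
variable {E : Type*} [Field E] {n : ℕ} {ω : E}

lemma sum_pow_mul_pow_sub_mul (hω : orderOf ω = n) {j l : ℕ} (hj : j < n) (hl : l < n) :
    ∑ k ∈ range n, ω ^ (k * j) * ω ^ ((n - k) * l) = if j = l then (n : E) else 0 := by
  have hterm : ∀ k ∈ range n, ω ^ (k * j) * ω ^ ((n - k) * l) = (ω ^ (j + (n - l))) ^ k := by
    intro k hk
    have hk : k ≤ n := (mem_range.mp hk).le
    have hmod : k * j + (n - k) * l ≡ (j + (n - l)) * k [MOD n] :=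
      Nat.modEq_iff_dvd.mpr ⟨k - l, by push_cast [hk, hl.le]; ring⟩
    rw [← pow_add, ← pow_mul, ← pow_mod_orderOf, hω, hmod, ← hω, pow_mod_orderOf]
  rw [sum_congr rfl hterm]
  split_ifs with hjl
  · rw [hjl, Nat.add_sub_cancel' hl.le, ← hω, pow_orderOf_eq_one]
    simp
  · have hne : ω ^ (j + (n - l)) ≠ 1 := fun h => by
      obtain ⟨t, ht⟩ := hω ▸ orderOf_dvd_of_pow_eq_one h
      rcases t with _ | _ | t
      · omega
      · omega
      · rw [show n * (t + 1 + 1) = n * t + 2 * n by ring] at ht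
        omega
    rw [geom_sum_eq hne, ← pow_mul, mul_comm, pow_mul, ← hω, pow_orderOf_eq_one, one_pow,
      sub_self, zero_div]

/-- Parseval's identity for the discrete Fourier transform of length `n = orderOf ω`. -/
lemma sum_dft_mul_dft_sub (hω : orderOf ω = n) (a b : Fin n → E) :
    ∑ k ∈ range n,
        (∑ j : Fin n, a j * ω ^ (k * j)) * (∑ l : Fin n, b l * ω ^ ((n - k) * l)) =
      n * ∑ j, a j * b j := by
  calc _ = ∑ j : Fin n, ∑ l : Fin n,
        a j * b l * ∑ k ∈ range n, ω ^ (k * (j : ℕ)) * ω ^ ((n - k) * (l : ℕ)) := by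
          simp_rw [sum_mul_sum, mul_sum]
          rw [sum_comm]
          refine sum_congr rfl fun j _ => ?_
          rw [sum_comm]
          refine sum_congr rfl fun l _ => sum_congr rfl fun k _ => ?_
          ring
    _ = ∑ j : Fin n, a j * b j * n := by
          refine sum_congr rfl fun j _ => ?_
          simp_rw [sum_pow_mul_pow_sub_mul hω j.is_lt (Fin.is_lt _), Fin.val_inj, mul_ite,
            mul_zero, sum_ite_eq, if_pos (mem_univ j)]
    _ = _ := by rw [mul_sum]; exact sum_congr rfl fun j _ => mul_comm _ _
end

section CyclicCode

variable {F E : Type*} [Field F] [Field E] [Algebra F E] {n : ℕ} {β : E}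

lemma mem_cyclicCode_iff_aeval [DecidableEq F] {T : Set ℕ} {c : Fin n → F} :
    c ∈ cyclicCode F E n β T ↔ ∀ k ∈ T, aeval (β ^ k) (ofFn n c) = 0 := by
  simp only [ofFn_eq_sum_monomial, map_sum, aeval_monomial, ← pow_mul]
  rfl

lemma mem_cyclicCode_iff_dvd [DecidableEq F] [DecidableEq E] {S : Finset ℕ} {g : F[X]}
    (hg : g.Monic) (hgS : g.map (algebraMap F E) = ∏ x ∈ S.image (β ^ ·), (X - C x))
    (c : Fin n → F) :
    c ∈ cyclicCode F E n β S ↔ g ∣ ofFn n c := by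
  rw [mem_cyclicCode_iff_aeval, ← map_dvd_map (algebraMap F E) (algebraMap F E).injective hg, hgS]
  constructor
  · intro h
    refine prod_dvd_of_coprime
      ((pairwise_coprime_X_sub_C Function.injective_id).set_pairwise _) ?_
    rintro _ hx
    obtain ⟨k, hk, rfl⟩ := mem_image.mp hx
    rw [dvd_iff_isRoot, IsRoot, eval_map_algebraMap]
    exact h k hk
  · intro h k hk
    have := (dvd_prod_of_mem (fun x => X - C x) (mem_image_of_mem (β ^ ·) hk)).trans h
    rwa [dvd_iff_isRoot, IsRoot, eval_map_algebraMap] at this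

lemma finrank_cyclicCode [Fintype F] [Finite E] (hβ : orderOf β = n) {S : Finset ℕ}
    (hSn : ∀ k ∈ S, k < n) (hS : ∀ k ∈ S, Fintype.card F * k % n ∈ S) :
    finrank F (cyclicCode F E n β S) = n - #S := by
  classical
  have hinj : Set.InjOn (β ^ ·) S := fun k hk l hl h =>
    pow_injOn_Iio_orderOf (by rw [hβ]; exact hSn k hk) (by rw [hβ]; exact hSn l hl) h
  obtain ⟨g, hg, hgS⟩ := exists_monic_map_eq_prod_X_sub_C (F := F) (S.image (β ^ ·)) (by
    simp only [mem_image]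
    rintro _ ⟨k, hk, rfl⟩
    exact ⟨_, hS k hk, by rw [← hβ, pow_mod_orderOf, ← pow_mul, mul_comm]⟩)
  have hdeg : g.natDegree = #S := by
    rw [← natDegree_map (algebraMap F E), hgS, natDegree_finsetProd_X_sub_C_eq_card,
      card_image_of_injOn hinj]
  have hcode : cyclicCode F E n β S = LinearMap.ker (modByMonicHom g ∘ₗ ofFn n) := by
    ext c
    rw [mem_cyclicCode_iff_dvd hg hgS, LinearMap.mem_ker, LinearMap.comp_apply,
      modByMonicHom_apply, modByMonic_eq_zero_iff_dvd hg]
  have hSle : #S ≤ n := by simpa using card_le_card (fun k hk => mem_range.mpr (hSn k hk))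
  rw [hcode, finrank_ker_modByMonicHom_comp_ofFn hg (hdeg ▸ hSle), hdeg]

lemma cyclicCode_range_eq_bot [Fintype F] [Finite E] (hβ : orderOf β = n) :
    cyclicCode F E n β ↑(range n) = ⊥ := by
  rw [← Submodule.finrank_eq_zero, finrank_cyclicCode hβ (fun k => mem_range.mp)
    (fun k hk => mem_range.mpr (Nat.mod_lt _ (by have := mem_range.mp hk; omega))), card_range,
    Nat.sub_self]

lemma disjoint_cyclicCode [Fintype F] [Finite E] (hβ : orderOf β = n) {S T : Set ℕ}
    (hST : ∀ k < n, k ∈ S ∨ k ∈ T) :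
    Disjoint (cyclicCode F E n β S) (cyclicCode F E n β T) := by
  rw [disjoint_iff, eq_bot_iff, ← cyclicCode_range_eq_bot hβ]
  rintro c ⟨hS, hT⟩ k hk
  exact (hST k (mem_range.mp hk)).elim (hS k) (hT k)

lemma dotProduct_eq_zero_of_mem_cyclicCode (hβ : orderOf β = n) (hn : (n : E) ≠ 0)
    {S T : Set ℕ}
    (hST : ∀ k < n, k ∈ S ∨ n - k ∈ T) {u v : Fin n → F}
    (hu : u ∈ cyclicCode F E n β S) (hv : v ∈ cyclicCode F E n β T) : u ⬝ᵥ v = 0 := by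
  have hsum := sum_dft_mul_dft_sub hβ (algebraMap F E ∘ u) (algebraMap F E ∘ v)
  rw [sum_eq_zero fun k hk => (hST k (mem_range.mp hk)).elim
    (fun h => by simp only [Function.comp_apply, hu k h, zero_mul])
    (fun h => by simp only [Function.comp_apply, hv _ h, mul_zero])] at hsum
  have : algebraMap F E (u ⬝ᵥ v) = 0 := by
    simpa [dotProduct, hn] using hsum.symm
  exact (map_eq_zero_iff _ (algebraMap F E).injective).mp this

end CyclicCode

lemma inter_dualSet_eq_zero {K : Type*} [Field K] {n : ℕ} {C D : Submodule K (Fin n → K)}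
    (hCD : Codisjoint C D) (horth : ∀ u ∈ D, ∀ v ∈ C, u ⬝ᵥ v = 0) :
    (C : Set (Fin n → K)) ∩ dualSet (C : Set (Fin n → K)) = {0} := by
  ext x
  constructor
  · rintro ⟨hxC, hxC'⟩
    have hker : C ⊔ D ≤ LinearMap.ker (dotProductBilin K K x) := sup_le (fun v hv => hxC' v hv)
      (fun u hu => by
        rw [LinearMap.mem_ker, dotProductBilin_apply_apply, dotProduct_comm]
        exact horth u hu x hxC)
    rw [hCD.eq_top] at hker
    exact dotProduct_eq_zero_iff.mp fun w => hker Submodule.mem_top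
  · rintro rfl
    exact ⟨C.zero_mem, fun v _ => zero_dotProduct v⟩

def qWeightClass (q n r : ℕ) : Finset ℕ := (range n).filter (fun i => qWeight q i % 2 = r)

section qWeightClass

variable {q m n r k : ℕ}

lemma mem_qWeightClass : k ∈ qWeightClass q n r ↔ k < n ∧ qWeight q k % 2 = r := by
  simp [qWeightClass]

lemma mem_qWeightClass_zero_or_one (hk : k < n) :
    k ∈ qWeightClass q n 0 ∨ k ∈ qWeightClass q n 1 := by
  simp only [mem_qWeightClass]
  omega

lemma card_qWeightClass_zero_add_one : #(qWeightClass q n 0) + #(qWeightClass q n 1) = n := by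
  rw [qWeightClass, qWeightClass,
    ← card_union_of_disjoint (disjoint_filter.mpr fun _ _ h => by omega), ← filter_or,
    filter_true_of_mem (fun _ _ => by omega), card_range]

lemma Tset_one_eq_qWeightClass : Tset q m 1 = ↑(qWeightClass q (q ^ m - 1) 1) := by
  ext i
  simp only [Tset, coe_filter, qWeightClass, mem_range, Set.mem_ofPred_eq]
  refine ⟨fun ⟨_, hi, hw⟩ => ⟨by omega, hw⟩, fun ⟨hi, hw⟩ => ⟨?_, by omega, hw⟩⟩
  rcases Nat.eq_zero_or_pos i with rfl | hi0
  · simp [qWeight] at hw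
  · exact hi0

lemma mul_mod_mem_qWeightClass (hq : 2 ≤ q) (hk : k ∈ qWeightClass q (q ^ m - 1) r) :
    q * k % (q ^ m - 1) ∈ qWeightClass q (q ^ m - 1) r := by
  rw [mem_qWeightClass] at hk ⊢
  exact ⟨Nat.mod_lt _ (by omega), by rw [qWeight_mul_mod hq hk.1, hk.2]⟩

lemma qWeight_pow_sub_one_sub_mod_two (hq : 2 ≤ q) (hm : Even m) (hk : k < q ^ m) :
    qWeight q (q ^ m - 1 - k) % 2 = qWeight q k % 2 := by
  have h := qWeight_add_qWeight_of_add_one_eq_pow hq m (x := q ^ m - 1 - k) (y := k) (by omega)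
  have : m * (q - 1) % 2 = 0 := Nat.even_iff.mp (hm.mul_right _)
  omega

lemma sub_mem_qWeightClass_one (hq : 2 ≤ q) (hm : Even m)
    (hk : k ∈ qWeightClass q (q ^ m - 1) 1) : q ^ m - 1 - k ∈ qWeightClass q (q ^ m - 1) 1 := by
  rw [mem_qWeightClass] at hk ⊢
  have hk0 : k ≠ 0 := by rintro rfl; simp [qWeight] at hk
  exact ⟨by omega, by rw [qWeight_pow_sub_one_sub_mod_two hq hm (by omega), hk.2]⟩

lemma card_qWeightClass_one (hq : 2 ≤ q) (hqe : Even q) (hm : Even m) (hm0 : m ≠ 0) :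
    #(qWeightClass q (q ^ m - 1) 1) = q ^ m / 2 := by
  have hqm : Even (q ^ m) := hqe.pow_of_ne_zero hm0
  have hpos : 0 < q ^ m := by positivity
  have hlast : ¬ qWeight q (q ^ m - 1) % 2 = 1 := by
    have := qWeight_pow_sub_one_sub_mod_two hq hm hpos
    simp_all [qWeight]
  have h := card_filter_qWeight_odd hq hqe (q ^ m / 2)
  have hrange : range (q ^ m) = insert (q ^ m - 1) (range (q ^ m - 1)) := by
    rw [← range_add_one, Nat.sub_add_cancel hpos]
  rwa [Nat.two_mul_div_two_of_even hqm, hrange, filter_insert, if_neg hlast] at h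

end qWeightClass

theorem stmt19_general (s q m n : ℕ) (hs : 1 ≤ s) (hq : q = 2 ^ s)
    (hm : 2 ≤ m) (hmeven : Even m) (hn : n = q ^ m - 1)
    (F E : Type*) [Field F] [Fintype F] [Field E] [Fintype E] [Algebra F E]
    (hF : Fintype.card F = q) (hE : Fintype.card E = q ^ m)
    (β : E) (hβ : orderOf β = n) :
    (cyclicCode F E n β (Tset q m 1) : Set (Fin n → F)) ∩
        dualSet (cyclicCode F E n β (Tset q m 1) : Set (Fin n → F)) = {0} ∧
      Module.finrank F (cyclicCode F E n β (Tset q m 1)) = (n - 1) / 2 := by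
  have hq2 : 2 ≤ q := hq ▸ Nat.le_self_pow (by omega) 2
  have hqe : Even q := hq ▸ (Nat.even_pow' (by omega)).mpr even_two
  have hqm : Even (q ^ m) := hqe.pow_of_ne_zero (by omega)
  have hnE : (n : E) ≠ 0 := by
    rw [hn, ← hE]
    exact natCast_card_sub_one_ne_zero E
  subst hn
  set C₀ := cyclicCode F E (q ^ m - 1) β ↑(qWeightClass q (q ^ m - 1) 0)
  set C₁ := cyclicCode F E (q ^ m - 1) β ↑(qWeightClass q (q ^ m - 1) 1)
  have hdim : ∀ r, finrank F (cyclicCode F E (q ^ m - 1) β ↑(qWeightClass q (q ^ m - 1) r)) =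
      q ^ m - 1 - #(qWeightClass q (q ^ m - 1) r) := fun r =>
    finrank_cyclicCode hβ (fun k hk => (mem_qWeightClass.mp hk).1)
      (fun k hk => by rw [hF]; exact mul_mod_mem_qWeightClass hq2 hk)
  have hcard₀ := card_qWeightClass_zero_add_one (q := q) (n := q ^ m - 1)
  have hcard₁ := card_qWeightClass_one hq2 hqe hmeven (by omega)
  have hcompl : IsCompl C₁ C₀ := by
    refine (Submodule.isCompl_iff_disjoint _ _ ?_).mpr ?_
    · rw [hdim, hdim, finrank_fin_fun]
      omega
    · exact disjoint_cyclicCode hβ fun k hk => (mem_qWeightClass_zero_or_one hk).symm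
  have horth : ∀ u ∈ C₀, ∀ v ∈ C₁, u ⬝ᵥ v = 0 := fun u hu v hv =>
    dotProduct_eq_zero_of_mem_cyclicCode hβ hnE (fun k hk =>
      (mem_qWeightClass_zero_or_one hk).imp_right (sub_mem_qWeightClass_one hq2 hmeven)) hu hv
  rw [Tset_one_eq_qWeightClass]
  refine ⟨inter_dualSet_eq_zero hcompl.codisjoint horth, ?_⟩
  rw [hdim, hcard₁]
  have := Nat.even_iff.mp hqm
  omega

theorem stmt19 (s q m n : ℕ) (hs : 1 ≤ s) (hq : q = 2 ^ s)
    (hm : 2 ≤ m) (hmeven : Even m) (hn : n = q ^ m - 1)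
    (F E : Type*) [Field F] [Fintype F] [DecidableEq F] [Field E] [Fintype E] [Algebra F E]
    (hF : Fintype.card F = q) (hE : Fintype.card E = q ^ m)
    (β : E) (hβ : orderOf β = n) :
    (cyclicCode F E n β (Tset q m 1) : Set (Fin n → F)) ∩
        dualSet (cyclicCode F E n β (Tset q m 1) : Set (Fin n → F)) = {0} ∧
      Module.finrank F (cyclicCode F E n β (Tset q m 1)) = (n - 1) / 2 :=
  stmt19_general s q m n hs hq hm hmeven hn F E hF hE β hβ
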